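/- For 0 < θ < 1, the identities (sin(πθ)/2) ∫_{-∞}^∞ dt / (cosh(πt) - cos(πθ)) = 1 - θ and (sin(πθ)/2) ∫_{-∞}^∞ dt / (cosh(πt) + cos(πθ)) = θ hold. -/

import Mathlib

/-!
The function `t ↦ arctan (tan (a / 2) * tanh (t / 2))` is an odd antiderivative of
`sin a / (2 * (cosh t + cos a))` rising from `0` to `a / 2` on `[0, ∞)`, so for `0 < a < π`
the even integrand has integral `a` over the line. Rescaling `t ↦ π t` and taking `a = π θ`,
respectively `a = π - π θ` (which flips the sign of `cos a`), gives both identities.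
-/

open MeasureTheory Set Real Filter Topology

namespace Real

theorem tanh_eq_one_sub_two_div (x : ℝ) : tanh x = 1 - 2 / (exp (2 * x) + 1) := by
  have hx : 0 < exp x := exp_pos x
  rw [tanh_eq_sinh_div_cosh, sinh_eq, cosh_eq, exp_neg, two_mul, exp_add]
  field_simp
  ring

theorem tendsto_tanh_atTop : Tendsto tanh atTop (𝓝 1) := by
  have h2x : Tendsto (fun x : ℝ => exp (2 * x) + 1) atTop atTop :=
    tendsto_atTop_add_const_right _ _ <|
      tendsto_exp_atTop.comp (tendsto_id.const_mul_atTop two_pos)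
  simpa [funext tanh_eq_one_sub_two_div] using
    tendsto_const_nhds.sub (tendsto_const_nhds.div_atTop h2x)

theorem hasDerivAt_tanh (x : ℝ) : HasDerivAt tanh (1 / cosh x ^ 2) x := by
  have h := (hasDerivAt_sinh x).div (hasDerivAt_cosh x) (cosh_pos x).ne'
  rw [show tanh = fun y => sinh y / cosh y from funext tanh_eq_sinh_div_cosh]
  refine h.congr_deriv ?_
  rw [← sq, ← sq, cosh_sq]
  ring

theorem hasDerivAt_arctan_tan_half_mul_tanh_half {a : ℝ} (ha : cos (a / 2) ≠ 0) (t : ℝ) :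
    HasDerivAt (fun t => arctan (tan (a / 2) * tanh (t / 2)))
      (sin a / 2 / (cosh t + cos a)) t := by
  have h := (((hasDerivAt_tanh (t / 2)).comp t ((hasDerivAt_id t).div_const 2)).const_mul
    (tan (a / 2))).arctan
  refine h.congr_deriv ?_
  have hch : cosh (t / 2) ≠ 0 := (cosh_pos _).ne'
  have hden : cos (a / 2) ^ 2 * cosh (t / 2) ^ 2 + sin (a / 2) ^ 2 * sinh (t / 2) ^ 2 ≠ 0 := by
    positivity
  have hsum : cosh t + cos a =
      2 * (cos (a / 2) ^ 2 * cosh (t / 2) ^ 2 + sin (a / 2) ^ 2 * sinh (t / 2) ^ 2) := by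
    have hcosh : cosh t = cosh (t / 2) ^ 2 + sinh (t / 2) ^ 2 := by rw [← cosh_two_mul]; ring_nf
    have hcos : cos a = 2 * cos (a / 2) ^ 2 - 1 := by rw [← cos_two_mul]; ring_nf
    linear_combination hcosh + hcos + (1 - 2 * cos (a / 2) ^ 2) * cosh_sq (t / 2) -
      2 * sinh (t / 2) ^ 2 * sin_sq_add_cos_sq (a / 2)
  rw [hsum, show sin a = 2 * sin (a / 2) * cos (a / 2) by rw [← sin_two_mul]; ring_nf,
    tan_eq_sin_div_cos, Function.comp_apply, id, tanh_eq_sinh_div_cosh]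
  field_simp

theorem integral_one_div_cosh_add_cos {a : ℝ} (ha : a ∈ Ioo 0 π) :
    sin a / 2 * ∫ t : ℝ, 1 / (cosh t + cos a) = a := by
  obtain ⟨ha0, haπ⟩ := ha
  have hsin : 0 < sin a := sin_pos_of_pos_of_lt_pi ha0 haπ
  have hcos : -1 < cos a := by
    simpa using cos_lt_cos_of_nonneg_of_le_pi ha0.le le_rfl haπ
  have hcos_half : 0 < cos (a / 2) := cos_pos_of_mem_Ioo ⟨by linarith, by linarith⟩
  have hderiv := hasDerivAt_arctan_tan_half_mul_tanh_half hcos_half.ne'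
  have hlim : Tendsto (fun t => arctan (tan (a / 2) * tanh (t / 2))) atTop (𝓝 (a / 2)) := by
    have h := ((continuous_arctan.tendsto _).comp
      ((tendsto_tanh_atTop.comp (tendsto_id.atTop_div_const two_pos)).const_mul (tan (a / 2))))
    rwa [mul_one, arctan_tan (by linarith) (by linarith)] at h
  have hhalf : ∫ t in Ioi 0, sin a / 2 / (cosh t + cos a) = a / 2 := by
    rw [integral_Ioi_of_hasDerivAt_of_nonneg (hderiv 0).continuousAt.continuousWithinAt
      (fun t _ => hderiv t) (fun t _ => ?_) hlim]
    · simp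
    · have := one_le_cosh t
      exact div_nonneg (by positivity) (by linarith)
  calc sin a / 2 * ∫ t : ℝ, 1 / (cosh t + cos a)
      = ∫ t : ℝ, sin a / 2 / (cosh |t| + cos a) := by
        rw [← integral_const_mul]
        simp only [cosh_abs, mul_one_div]
    _ = a := by rw [integral_comp_abs (f := fun t => sin a / 2 / (cosh t + cos a)), hhalf]; ring

theorem integral_one_div_cosh_mul_add_cos {a : ℝ} (ha : a ∈ Ioo 0 π) (c : ℝ) :
    sin a / 2 * ∫ t : ℝ, 1 / (cosh (c * t) + cos a) = a / |c| := by
  rw [Measure.integral_comp_mul_left (fun t => 1 / (cosh t + cos a)), smul_eq_mul,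
    mul_left_comm, integral_one_div_cosh_add_cos ha, abs_inv, div_eq_inv_mul]

end Real

theorem statement17 (θ : ℝ) (hθ : θ ∈ Ioo (0 : ℝ) 1) :
    (Real.sin (π * θ) / 2 *
        ∫ t : ℝ, 1 / (Real.cosh (π * t) - Real.cos (π * θ))) = 1 - θ ∧
      (Real.sin (π * θ) / 2 *
        ∫ t : ℝ, 1 / (Real.cosh (π * t) + Real.cos (π * θ))) = θ := by
  obtain ⟨hθ0, hθ1⟩ := hθ
  have hscaled (a : ℝ) (ha : a ∈ Ioo 0 π) :
      sin a / 2 * ∫ t : ℝ, 1 / (cosh (π * t) + cos a) = a / π := by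
    rw [integral_one_div_cosh_mul_add_cos ha, abs_of_pos pi_pos]
  have hπθ : π * θ ∈ Ioo 0 π := ⟨by positivity, by nlinarith [pi_pos]⟩
  constructor
  · have h := hscaled (π - π * θ) ⟨by linarith [hπθ.2], by linarith [hπθ.1]⟩
    simp only [sin_pi_sub, cos_pi_sub, ← sub_eq_add_neg] at h
    rw [h]
    field_simp
  · rw [hscaled _ hπθ]
    field_simp
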